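/- Let X be a real random variable with E[X] = 0 and E[|X|³] < ∞, let σ > 0, ε > 0 and u ∈ ℝ. Then | E[Ψ((u − εX)/σ)] − Ψ(u/σ) − (ε² E[X²]/(2σ²)) Ψ''(u/σ) | ≤ ε³ E[|X|³]/(6 σ³ √(2π)). -/

import Mathlib

open MeasureTheory ProbabilityTheory

/-- The standard Gaussian tail function `Ψ(x) = (2π)^{-1/2} ∫_x^∞ e^{-t²/2} dt`. -/
noncomputable def Psi (x : ℝ) : ℝ :=
  ∫ t in Set.Ioi x, (Real.sqrt (2 * Real.pi))⁻¹ * Real.exp (-t ^ 2 / 2)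

/-- Second derivative of the Gaussian tail: `Ψ''(x) = (2π)^{-1/2} x e^{-x²/2}`. -/
noncomputable def PsiD2 (x : ℝ) : ℝ :=
  (Real.sqrt (2 * Real.pi))⁻¹ * x * Real.exp (-x ^ 2 / 2)

noncomputable def gPDF (t : ℝ) : ℝ := (Real.sqrt (2 * Real.pi))⁻¹ * Real.exp (-t ^ 2 / 2)

lemma gPDF_cont : Continuous gPDF := by
  unfold gPDF; fun_prop

lemma gPDF_nonneg (t : ℝ) : 0 ≤ gPDF t := by
  unfold gPDF; positivity

lemma gPDF_int : MeasureTheory.Integrable gPDF := by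
  have h : MeasureTheory.Integrable (fun t : ℝ => Real.exp (-(1/2 : ℝ) * t ^ 2)) :=
    integrable_exp_neg_mul_sq (by norm_num)
  have : gPDF = fun t => (Real.sqrt (2 * Real.pi))⁻¹ * Real.exp (-(1/2 : ℝ) * t ^ 2) := by
    funext t; unfold gPDF; ring_nf
  rw [this]
  exact h.const_mul _

lemma hasDerivAt_gPDF (t : ℝ) : HasDerivAt gPDF (-(t * gPDF t)) t := by
  have h1 : HasDerivAt (fun s : ℝ => -s ^ 2 / 2) (-t) t := by
    have := ((hasDerivAt_pow 2 t).neg).div_const 2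
    simpa using this.congr_deriv (by ring)
  have h2 : HasDerivAt (fun s : ℝ => Real.exp (-s ^ 2 / 2)) (Real.exp (-t^2/2) * (-t)) t :=
    (Real.hasDerivAt_exp _).comp t h1
  have := h2.const_mul (Real.sqrt (2 * Real.pi))⁻¹
  unfold gPDF
  refine this.congr_deriv ?_
  ring

lemma hasDerivAt_gPDF' (t : ℝ) :
    HasDerivAt (fun s => -(s * gPDF s)) ((t ^ 2 - 1) * gPDF t) t := by
  have := ((hasDerivAt_id t).mul (hasDerivAt_gPDF t)).neg
  refine this.congr_deriv ?_
  simp [id]; ring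

lemma abs_sq_sub_one_exp_le (t : ℝ) : |t ^ 2 - 1| * Real.exp (-t ^ 2 / 2) ≤ 1 := by
  have key : |t ^ 2 - 1| ≤ Real.exp (t ^ 2 / 2) := by
    rcases abs_cases (t ^ 2 - 1) with ⟨h, h2⟩ | ⟨h, h2⟩
    · rw [h]
      have hq : 1 + t ^ 2 / 2 + (t ^ 2 / 2) ^ 2 / 2 ≤ Real.exp (t ^ 2 / 2) :=
        Real.quadratic_le_exp_of_nonneg (by positivity)
      nlinarith [sq_nonneg (t ^ 2 - 4), sq_nonneg t]
    · rw [h]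
      have h1 : (1 : ℝ) ≤ Real.exp (t ^ 2 / 2) := by
        rw [Real.one_le_exp_iff]; positivity
      nlinarith [sq_nonneg t]
  have hrw : Real.exp (-t ^ 2 / 2) = (Real.exp (t ^ 2 / 2))⁻¹ := by
    rw [← Real.exp_neg]; ring_nf
  rw [hrw]
  rw [mul_inv_le_iff₀ (Real.exp_pos _), one_mul]
  exact key

lemma gPDF'_lipschitz (s t : ℝ) :
    |(-(s * gPDF s)) - (-(t * gPDF t))| ≤ (Real.sqrt (2 * Real.pi))⁻¹ * |s - t| := by
  have := (convex_univ (𝕜 := ℝ) (E := ℝ)).norm_image_sub_le_of_norm_hasDerivWithin_le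
    (f := fun r => -(r * gPDF r)) (f' := fun r => (r ^ 2 - 1) * gPDF r)
    (C := (Real.sqrt (2 * Real.pi))⁻¹)
    (fun x _ => (hasDerivAt_gPDF' x).hasDerivWithinAt)
    (fun x _ => by
      rw [Real.norm_eq_abs]
      unfold gPDF
      rw [abs_mul, abs_mul]
      have h1 : |(Real.sqrt (2 * Real.pi))⁻¹| = (Real.sqrt (2 * Real.pi))⁻¹ := by
        rw [abs_of_nonneg]; positivity
      have h2 : |Real.exp (-x ^ 2 / 2)| = Real.exp (-x ^ 2 / 2) := abs_of_nonneg (Real.exp_pos _).le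
      rw [h1, h2]
      calc |x ^ 2 - 1| * ((Real.sqrt (2 * Real.pi))⁻¹ * Real.exp (-x ^ 2 / 2))
          = (Real.sqrt (2 * Real.pi))⁻¹ * (|x ^ 2 - 1| * Real.exp (-x ^ 2 / 2)) := by ring
        _ ≤ (Real.sqrt (2 * Real.pi))⁻¹ * 1 := by
            apply mul_le_mul_of_nonneg_left (abs_sq_sub_one_exp_le x) (by positivity)
        _ = (Real.sqrt (2 * Real.pi))⁻¹ := mul_one _)
    (Set.mem_univ t) (Set.mem_univ s)
  simpa [Real.norm_eq_abs] using this

/-- Quadratic Taylor bound for the Gaussian density. -/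
lemma gPDF_taylor1 (a t : ℝ) :
    |gPDF t - gPDF a - (t - a) * (-(a * gPDF a))|
      ≤ (Real.sqrt (2 * Real.pi))⁻¹ / 2 * (t - a) ^ 2 := by
  set C := (Real.sqrt (2 * Real.pi))⁻¹ with hC
  have hC0 : 0 ≤ C := by rw [hC]; positivity
  -- f(t) := g t - g a - (t-a) g'(a); f(a) = 0; f'(s) = g'(s) - g'(a).
  set F := fun s => gPDF s - gPDF a - (s - a) * (-(a * gPDF a)) with hF
  have hFd : ∀ s : ℝ, HasDerivAt F ((-(s * gPDF s)) - (-(a * gPDF a))) s := by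
    intro s
    have h1 := (hasDerivAt_gPDF s).sub_const (gPDF a)
    have h2 : HasDerivAt (fun r : ℝ => (r - a) * (-(a * gPDF a))) (-(a * gPDF a)) s := by
      simpa using ((hasDerivAt_id s).sub_const a).mul_const (-(a * gPDF a))
    exact h1.sub h2
  -- integral representation:  F t = ∫_a^t F'
  have hFa : F a = 0 := by simp [hF]
  have hcont : Continuous fun s => (-(s * gPDF s)) - (-(a * gPDF a)) := by
    have : Continuous fun s : ℝ => s * gPDF s := continuous_id.mul gPDF_cont
    fun_prop
  have hFt : ∀ t : ℝ, F t = ∫ s in a..t, ((-(s * gPDF s)) - (-(a * gPDF a))) := by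
    intro t
    rw [← sub_zero (F t), ← hFa]
    exact (_root_.intervalIntegral.integral_eq_sub_of_hasDerivAt (fun s _ => hFd s)
      (hcont.intervalIntegrable _ _)).symm
  rw [show gPDF t - gPDF a - (t - a) * (-(a * gPDF a)) = F t from rfl, hFt]
  -- now bound the integral
  rcases le_total a t with hat | hta
  · calc |∫ s in a..t, ((-(s * gPDF s)) - (-(a * gPDF a)))|
        ≤ ∫ s in a..t, C * |s - a| := by
          refine le_trans (_root_.intervalIntegral.abs_integral_le_integral_abs hat) ?_
          apply _root_.intervalIntegral.integral_mono_on hat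
            ((hcont.abs).intervalIntegrable _ _)
            ((continuous_const.mul (continuous_id.sub continuous_const).abs).intervalIntegrable _ _)
          intro s _
          exact gPDF'_lipschitz s a
      _ = C / 2 * (t - a) ^ 2 := by
          have : ∀ s ∈ Set.uIcc a t, C * |s - a| = C * (s - a) := by
            intro s hs
            rw [Set.uIcc_of_le hat] at hs
            rw [abs_of_nonneg (by linarith [hs.1])]
          rw [_root_.intervalIntegral.integral_congr this]
          rw [_root_.intervalIntegral.integral_const_mul]
          have : ∫ s in a..t, (s - a) = ∫ s in (0:ℝ)..(t - a), s := by
            simpa using (_root_.intervalIntegral.integral_comp_sub_right (fun s => s) a (a := a) (b := t))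
          rw [this]
          simp [_root_.integral_id]
          ring
  · calc |∫ s in a..t, ((-(s * gPDF s)) - (-(a * gPDF a)))|
        = |∫ s in t..a, ((-(s * gPDF s)) - (-(a * gPDF a)))| := by
          rw [_root_.intervalIntegral.integral_symm, abs_neg]
      _ ≤ ∫ s in t..a, C * |s - a| := by
          refine le_trans (_root_.intervalIntegral.abs_integral_le_integral_abs hta) ?_
          apply _root_.intervalIntegral.integral_mono_on hta
            ((hcont.abs).intervalIntegrable _ _)
            ((continuous_const.mul (continuous_id.sub continuous_const).abs).intervalIntegrable _ _)
          intro s _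
          exact gPDF'_lipschitz s a
      _ = C / 2 * (t - a) ^ 2 := by
          have : ∀ s ∈ Set.uIcc t a, C * |s - a| = C * (a - s) := by
            intro s hs
            rw [Set.uIcc_of_le hta] at hs
            rw [abs_of_nonpos (by linarith [hs.2])]
            ring_nf
          rw [_root_.intervalIntegral.integral_congr this]
          rw [_root_.intervalIntegral.integral_const_mul]
          have : ∫ s in t..a, (a - s) = ∫ s in (a - a)..(a - t), s := by
            simpa using (_root_.intervalIntegral.integral_comp_sub_left (fun s => s) a (a := t) (b := a))
          rw [this]
          simp [_root_.integral_id]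
          ring_nf

lemma Psi_sub (a b : ℝ) : Psi b - Psi a = -∫ s in a..b, gPDF s := by
  have key : ∀ x y : ℝ, x ≤ y → Psi x - Psi y = ∫ s in x..y, gPDF s := by
    intro x y hxy
    have hsplit : Set.Ioc x y ∪ Set.Ioi y = Set.Ioi x := Set.Ioc_union_Ioi_eq_Ioi hxy
    have hdisj : Disjoint (Set.Ioc x y) (Set.Ioi y) := by
      apply Set.disjoint_left.2
      intro s hs1 hs2
      exact absurd hs1.2 (not_le.2 hs2)
    have h1 : (∫ s in Set.Ioc x y ∪ Set.Ioi y, gPDF s) =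
        (∫ s in Set.Ioc x y, gPDF s) + ∫ s in Set.Ioi y, gPDF s :=
      MeasureTheory.setIntegral_union hdisj measurableSet_Ioi
        gPDF_int.integrableOn gPDF_int.integrableOn
    have h2 : Psi x = (∫ s in Set.Ioc x y, gPDF s) + Psi y := by
      show (∫ s in Set.Ioi x, gPDF s) = (∫ s in Set.Ioc x y, gPDF s) + ∫ s in Set.Ioi y, gPDF s
      rw [← hsplit]; exact h1
    rw [h2, _root_.intervalIntegral.integral_of_le hxy]
    ring
  rcases le_total a b with hab | hba
  · rw [← key a b hab]; ring
  · rw [_root_.intervalIntegral.integral_symm, ← key b a hba]; ring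

lemma integral_sq_bound (a b D : ℝ) (_hD : 0 ≤ D) {f : ℝ → ℝ} (hf : Continuous f)
    (hb : ∀ t, |f t| ≤ D * (t - a) ^ 2) :
    |∫ t in a..b, f t| ≤ D * |b - a| ^ 3 / 3 := by
  have hcb : Continuous fun t : ℝ => D * (t - a) ^ 2 := by fun_prop
  have key : ∀ c d : ℝ, c ≤ d → (∫ t in c..d, D * (t - a) ^ 2) =
      D * ((d - a) ^ 3 - (c - a) ^ 3) / 3 := by
    intro c d _
    rw [_root_.intervalIntegral.integral_const_mul]
    have : (∫ t in c..d, (t - a) ^ 2) = ∫ t in (c - a)..(d - a), t ^ 2 :=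
      _root_.intervalIntegral.integral_comp_sub_right (fun t => t ^ 2) a
    rw [this, integral_pow]
    ring
  rcases le_total a b with hab | hba
  · calc |∫ t in a..b, f t|
        ≤ ∫ t in a..b, D * (t - a) ^ 2 := by
          refine le_trans (_root_.intervalIntegral.abs_integral_le_integral_abs hab) ?_
          exact _root_.intervalIntegral.integral_mono_on hab (hf.abs.intervalIntegrable _ _)
            (hcb.intervalIntegrable _ _) (fun t _ => hb t)
      _ = D * |b - a| ^ 3 / 3 := by
          rw [key a b hab, abs_of_nonneg (by linarith : (0:ℝ) ≤ b - a)]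
          ring
  · calc |∫ t in a..b, f t|
        = |∫ t in b..a, f t| := by rw [_root_.intervalIntegral.integral_symm, abs_neg]
      _ ≤ ∫ t in b..a, D * (t - a) ^ 2 := by
          refine le_trans (_root_.intervalIntegral.abs_integral_le_integral_abs hba) ?_
          exact _root_.intervalIntegral.integral_mono_on hba (hf.abs.intervalIntegrable _ _)
            (hcb.intervalIntegrable _ _) (fun t _ => hb t)
      _ = D * |b - a| ^ 3 / 3 := by
          rw [key b a hba, abs_of_nonpos (by linarith : b - a ≤ 0)]
          ring

/-- Second-order Taylor bound for the Gaussian tail function. -/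
lemma Psi_taylor2 (a h : ℝ) :
    |Psi (a + h) - Psi a + h * gPDF a - h ^ 2 / 2 * (a * gPDF a)|
      ≤ (Real.sqrt (2 * Real.pi))⁻¹ * |h| ^ 3 / 6 := by
  set C := (Real.sqrt (2 * Real.pi))⁻¹ with hC
  have hC0 : 0 ≤ C := by rw [hC]; positivity
  set f := fun t => gPDF t - gPDF a - (t - a) * (-(a * gPDF a)) with hf
  have hfc : Continuous f := by
    have := gPDF_cont
    fun_prop
  have hbd : ∀ t, |f t| ≤ C / 2 * (t - a) ^ 2 := fun t => gPDF_taylor1 a t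
  have hint : |∫ t in a..(a + h), f t| ≤ C / 2 * |h| ^ 3 / 3 := by
    have := integral_sq_bound a (a + h) (C / 2) (by linarith) hfc hbd
    simpa using this
  have heq : Psi (a + h) - Psi a + h * gPDF a - h ^ 2 / 2 * (a * gPDF a)
      = -∫ t in a..(a + h), f t := by
    have h1 : (∫ t in a..(a+h), f t) =
        (∫ t in a..(a+h), gPDF t) - (∫ t in a..(a+h), gPDF a)
          - ∫ t in a..(a+h), (t - a) * (-(a * gPDF a)) := by
      simp only [hf]
      have hc1 : Continuous fun t : ℝ => (t - a) * (-(a * gPDF a)) := by fun_prop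
      have hc2 : Continuous fun t : ℝ => gPDF t - gPDF a := gPDF_cont.sub continuous_const
      rw [_root_.intervalIntegral.integral_sub (hc2.intervalIntegrable _ _)
        (hc1.intervalIntegrable _ _),
        _root_.intervalIntegral.integral_sub (gPDF_cont.intervalIntegrable _ _)
        (continuous_const.intervalIntegrable _ _)]
    have h2 : (∫ t in a..(a+h), gPDF a) = h * gPDF a := by
      simp [mul_comm]
    have h3 : (∫ t in a..(a+h), (t - a) * (-(a * gPDF a))) = -(h ^ 2 / 2 * (a * gPDF a)) := by
      rw [_root_.intervalIntegral.integral_mul_const]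
      have : (∫ t in a..(a+h), (t - a)) = ∫ t in (a - a)..(a + h - a), t := by
        simpa using _root_.intervalIntegral.integral_comp_sub_right (fun t => t) a (a := a) (b := a + h)
      rw [this]
      simp [_root_.integral_id]
      try ring
    have h4 := Psi_sub a (a + h)
    rw [h1, h2, h3]
    rw [show Psi (a + h) - Psi a = -∫ s in a..(a+h), gPDF s from h4]
    ring
  rw [heq, abs_neg]
  calc |∫ t in a..(a + h), f t| ≤ C / 2 * |h| ^ 3 / 3 := hint
    _ = C * |h| ^ 3 / 6 := by ring

lemma Psi_anti : Antitone Psi := by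
  intro x y hxy
  have h := Psi_sub x y
  have hnn : 0 ≤ ∫ s in x..y, gPDF s :=
    _root_.intervalIntegral.integral_nonneg hxy (fun s _ => gPDF_nonneg s)
  linarith [h]

lemma Psi_nonneg (x : ℝ) : 0 ≤ Psi x := by
  unfold Psi
  apply MeasureTheory.setIntegral_nonneg measurableSet_Ioi
  intro t _
  positivity

lemma Psi_le (x : ℝ) : Psi x ≤ ∫ t, gPDF t := by
  unfold Psi
  exact MeasureTheory.setIntegral_le_integral gPDF_int
    (Filter.Eventually.of_forall (fun t => gPDF_nonneg t))

/-- Second-order expansion of the mean Gaussian tail under a random level shift. -/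
theorem mean_gaussian_tail_expansion
    {Ω : Type*} [MeasurableSpace Ω] (P : Measure Ω) [IsProbabilityMeasure P]
    (X : Ω → ℝ) (hX_meas : Measurable X)
    (hX_mean : ∫ ω, X ω ∂P = 0)
    (hX3 : Integrable (fun ω => |X ω| ^ 3) P)
    (σ : ℝ) (hσ : 0 < σ) (ε : ℝ) (hε : 0 < ε) (u : ℝ) :
    |(∫ ω, Psi ((u - ε * X ω) / σ) ∂P) - Psi (u / σ)
        - ε ^ 2 * (∫ ω, (X ω) ^ 2 ∂P) / (2 * σ ^ 2) * PsiD2 (u / σ)|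
      ≤ ε ^ 3 * (∫ ω, |X ω| ^ 3 ∂P) / (6 * σ ^ 3 * Real.sqrt (2 * Real.pi)) := by
  set C := (Real.sqrt (2 * Real.pi))⁻¹ with hC
  have hC0 : 0 < C := by rw [hC]; positivity
  set a := u / σ with ha
  set h : Ω → ℝ := fun ω => -(ε * X ω) / σ with hh
  have harg : ∀ ω, (u - ε * X ω) / σ = a + h ω := by intro ω; rw [ha, hh]; ring
  have hPsiD2 : PsiD2 a = a * gPDF a := by unfold PsiD2 gPDF; ring
  -- integrability of X and X²
  have hX1 : Integrable X P := by
    refine (MeasureTheory.Integrable.mono ((integrable_const (1:ℝ)).add hX3)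
      hX_meas.aestronglyMeasurable ?_)
    apply Filter.Eventually.of_forall
    intro ω
    rw [Real.norm_eq_abs, Real.norm_eq_abs]
    have h0 : (0:ℝ) ≤ |X ω| := abs_nonneg _
    have : |X ω| ≤ 1 + |X ω| ^ 3 := by nlinarith [sq_nonneg (|X ω| - 1), sq_nonneg (|X ω| + 1)]
    calc |X ω| ≤ 1 + |X ω| ^ 3 := this
      _ ≤ |1 + |X ω| ^ 3| := le_abs_self _
  have hX2 : Integrable (fun ω => (X ω) ^ 2) P := by
    refine (MeasureTheory.Integrable.mono ((integrable_const (1:ℝ)).add hX3)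
      ((hX_meas.pow_const 2).aestronglyMeasurable) ?_)
    apply Filter.Eventually.of_forall
    intro ω
    rw [Real.norm_eq_abs, Real.norm_eq_abs]
    have h0 : (0:ℝ) ≤ |X ω| := abs_nonneg _
    have h1 : |(X ω) ^ 2| = |X ω| ^ 2 := by rw [abs_pow]
    rw [h1]
    have : |X ω| ^ 2 ≤ 1 + |X ω| ^ 3 := by nlinarith [sq_nonneg (|X ω| - 1)]
    calc |X ω| ^ 2 ≤ 1 + |X ω| ^ 3 := this
      _ ≤ |1 + |X ω| ^ 3| := le_abs_self _
  have hh_meas : Measurable h := by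
    apply Measurable.div_const
    exact (hX_meas.const_mul ε).neg
  -- integrability of Psi (a + h ω)
  have hPsiMeas : Measurable Psi := Psi_anti.measurable
  have hPsiArgMeas : Measurable fun ω => Psi (a + h ω) :=
    hPsiMeas.comp (measurable_const.add hh_meas)
  have hPsiInt : Integrable (fun ω => Psi (a + h ω)) P := by
    refine MeasureTheory.Integrable.mono (integrable_const (∫ t, gPDF t))
      hPsiArgMeas.aestronglyMeasurable ?_
    apply Filter.Eventually.of_forall
    intro ω
    rw [Real.norm_eq_abs, Real.norm_eq_abs, abs_of_nonneg (Psi_nonneg _)]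
    calc Psi (a + h ω) ≤ ∫ t, gPDF t := Psi_le _
      _ ≤ |∫ t, gPDF t| := le_abs_self _
  -- integrals of h and h²
  have hh_int : Integrable h P := ((hX1.const_mul ε).neg).div_const σ
  have hh_mean : ∫ ω, h ω ∂P = 0 := by
    rw [hh]
    simp only [neg_div]
    rw [MeasureTheory.integral_neg]
    rw [MeasureTheory.integral_div]
    rw [MeasureTheory.integral_const_mul, hX_mean]
    simp
  have hh2_int : Integrable (fun ω => (h ω) ^ 2) P := by
    have : (fun ω => (h ω) ^ 2) = fun ω => (ε ^ 2 / σ ^ 2) * (X ω) ^ 2 := by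
      funext ω; rw [hh]; ring
    rw [this]
    exact hX2.const_mul _
  have hh2_mean : ∫ ω, (h ω) ^ 2 ∂P = ε ^ 2 / σ ^ 2 * ∫ ω, (X ω) ^ 2 ∂P := by
    have : (fun ω => (h ω) ^ 2) = fun ω => (ε ^ 2 / σ ^ 2) * (X ω) ^ 2 := by
      funext ω; rw [hh]; ring
    rw [this, MeasureTheory.integral_const_mul]
  -- the remainder
  set R : Ω → ℝ := fun ω =>
    Psi (a + h ω) - Psi a + h ω * gPDF a - (h ω) ^ 2 / 2 * (a * gPDF a) with hR
  have hR_bound : ∀ ω, |R ω| ≤ C * |h ω| ^ 3 / 6 := fun ω => Psi_taylor2 a (h ω)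
  have hR_meas : Measurable R := by
    apply Measurable.sub
    apply Measurable.add
    exact hPsiArgMeas.sub measurable_const
    exact hh_meas.mul_const _
    exact ((hh_meas.pow_const 2).div_const 2).mul_const _
  have habsh3_int : Integrable (fun ω => C * |h ω| ^ 3 / 6) P := by
    have : (fun ω => C * |h ω| ^ 3 / 6) = fun ω => (C * (ε / σ) ^ 3 / 6) * |X ω| ^ 3 := by
      funext ω
      rw [hh]
      rw [abs_div, abs_neg, abs_mul, abs_of_pos hε, abs_of_pos hσ]
      ring
    rw [this]
    exact hX3.const_mul _
  have hR_int : Integrable R P := by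
    refine MeasureTheory.Integrable.mono habsh3_int hR_meas.aestronglyMeasurable ?_
    apply Filter.Eventually.of_forall
    intro ω
    rw [Real.norm_eq_abs, Real.norm_eq_abs]
    calc |R ω| ≤ C * |h ω| ^ 3 / 6 := hR_bound ω
      _ ≤ |C * |h ω| ^ 3 / 6| := le_abs_self _
  -- identify the LHS with ∫ R
  have hmain : (∫ ω, Psi ((u - ε * X ω) / σ) ∂P) - Psi a
      - ε ^ 2 * (∫ ω, (X ω) ^ 2 ∂P) / (2 * σ ^ 2) * PsiD2 a = ∫ ω, R ω ∂P := by
    have h1 : (fun ω => Psi ((u - ε * X ω) / σ)) = fun ω => Psi (a + h ω) := by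
      funext ω; rw [harg ω]
    rw [h1]
    rw [hR]
    beta_reduce
    have iC : Integrable (fun ω => Psi (a + h ω) - Psi a) P :=
      hPsiInt.sub (integrable_const _)
    have iD : Integrable (fun ω => h ω * gPDF a) P := hh_int.mul_const _
    have iA : Integrable (fun ω => Psi (a + h ω) - Psi a + h ω * gPDF a) P := iC.add iD
    have iB : Integrable (fun ω => (h ω) ^ 2 / 2 * (a * gPDF a)) P :=
      (hh2_int.div_const 2).mul_const _
    rw [MeasureTheory.integral_sub iA iB]
    rw [MeasureTheory.integral_add iC iD]
    rw [MeasureTheory.integral_sub hPsiInt (integrable_const _)]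
    rw [MeasureTheory.integral_const]
    simp only [measure_univ, probReal_univ, ENNReal.toReal_one, one_smul, smul_eq_mul]
    rw [MeasureTheory.integral_mul_const, hh_mean]
    have : ∫ ω, (h ω) ^ 2 / 2 * (a * gPDF a) ∂P
        = (∫ ω, (h ω) ^ 2 ∂P) / 2 * (a * gPDF a) := by
      rw [MeasureTheory.integral_mul_const, MeasureTheory.integral_div]
    rw [this, hh2_mean, hPsiD2]
    ring
  rw [hmain]
  -- final bound
  calc |∫ ω, R ω ∂P| ≤ ∫ ω, |R ω| ∂P := by
        rw [← Real.norm_eq_abs]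
        exact (MeasureTheory.norm_integral_le_integral_norm _)
    _ ≤ ∫ ω, C * |h ω| ^ 3 / 6 ∂P := by
        apply MeasureTheory.integral_mono hR_int.abs habsh3_int
        intro ω
        exact hR_bound ω
    _ = ε ^ 3 * (∫ ω, |X ω| ^ 3 ∂P) / (6 * σ ^ 3 * Real.sqrt (2 * Real.pi)) := by
        have heq : (fun ω => C * |h ω| ^ 3 / 6)
            = fun ω => (C * (ε / σ) ^ 3 / 6) * |X ω| ^ 3 := by
          funext ω
          rw [hh]
          rw [abs_div, abs_neg, abs_mul, abs_of_pos hε, abs_of_pos hσ]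
          ring
        rw [heq, MeasureTheory.integral_const_mul]
        have h2π : (0:ℝ) < Real.sqrt (2 * Real.pi) := by positivity
        have hconst : C * (ε / σ) ^ 3 / 6 = ε ^ 3 / (6 * σ ^ 3 * Real.sqrt (2 * Real.pi)) := by
          rw [hC]
          field_simp
        rw [hconst]
        ring
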